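/- arXiv:1803.03938 — 6 statements merged into one kernel-verified Lean document; each statement's English description precedes it below -/
import Mathlib

section
/- Write X(1,e₂,e₃) = Σ_{k=1}^n V_k·I_k with V_k ∈ ℂ. Then for each u ∈ {1,…,m}, X(I_u, e₂·I_u, e₃·I_u) = V_u·I_u + Σ_{s} V_s·I_s, where the sum runs over those s ∈ {m+1,…,n} with I_u·I_s = I_s. Consequently X(I_u, e₂·I_u, e₃·I_u) = 0 if and only if V_u = 0 and V_s = 0 for every s ∈ {m+1,…,n} with I_u·I_s = I_s; that is, the characteristic system generated by X(I_u, e₂·I_u, e₃·I_u) = 0 is a subsystem (reduction) of the characteristic system {V_1 = 0, …, V_n = 0} generated by X(1,e₂,e₃) = 0. -/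
/-! Since `X` is homogeneous of degree `N ≥ 1` and `I_u` is idempotent,
`X(I_u, e₂ I_u, e₃ I_u) = X(1, e₂, e₃) · I_u`. By the Cartan rules, multiplication by `I_u`
fixes `I_u` and the non-idempotent `I_s` with `I_u I_s = I_s`, and kills every other basis element.
Linear independence of the basis then reads off the vanishing conditions. -/

open scoped Classical

/-- The characteristic polynomial `X(g₁,g₂,g₃) = Σ_{α+β+γ=N} C_{α,β,γ} g₁^α g₂^β g₃^γ`. -/
def charPoly {A : Type} [CommRing A] [Algebra ℂ A] (N : ℕ) (C : ℕ → ℕ → ℕ → ℂ)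
    (g₁ g₂ g₃ : A) : A :=
  ∑ p ∈ (Finset.range (N + 1) ×ˢ Finset.range (N + 1) ×ˢ Finset.range (N + 1)).filter
      (fun p => p.1 + p.2.1 + p.2.2 = N),
    C p.1 p.2.1 p.2.2 • (g₁ ^ p.1 * g₂ ^ p.2.1 * g₃ ^ p.2.2)

open Finset

theorem charPoly_mul_mul_mul {A : Type} [CommRing A] [Algebra ℂ A] (N : ℕ)
    (C : ℕ → ℕ → ℕ → ℂ) (g₁ g₂ g₃ c : A) :
    charPoly N C (g₁ * c) (g₂ * c) (g₃ * c) = charPoly N C g₁ g₂ g₃ * c ^ N := by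
  unfold charPoly
  rw [sum_mul]
  refine sum_congr rfl fun p hp => ?_
  rw [smul_mul_assoc, ← (mem_filter.mp hp).2]
  ring_nf

theorem charPoly_mul_of_isIdempotentElem {A : Type} [CommRing A] [Algebra ℂ A] {N : ℕ}
    (hN : 1 ≤ N) (C : ℕ → ℕ → ℕ → ℂ) (g₁ g₂ g₃ : A) {e : A} (he : IsIdempotentElem e) :
    charPoly N C (g₁ * e) (g₂ * e) (g₃ * e) = charPoly N C g₁ g₂ g₃ * e := by
  obtain ⟨N, rfl⟩ : ∃ k, N = k + 1 := ⟨N - 1, by omega⟩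
  rw [charPoly_mul_mul_mul, he.pow_succ_eq]

theorem LinearIndependent.sum_smul_eq_zero_iff {ι R M : Type*} [Ring R] [AddCommGroup M]
    [Module R M] {v : ι → M} (hv : LinearIndependent R v) (s : Finset ι) (c : ι → R) :
    ∑ i ∈ s, c i • v i = 0 ↔ ∀ i ∈ s, c i = 0 :=
  ⟨linearIndependent_iff'.mp hv s c, fun h => sum_eq_zero fun i hi => by rw [h i hi, zero_smul]⟩

theorem mul_eq_ite_of_cartan {A : Type} [CommRing A] {n m : ℕ} {I : Fin n → A}
    (hne : ∀ k, I k ≠ 0)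
    (h1 : ∀ r s : Fin n, (r : ℕ) < m → (s : ℕ) < m → I r * I s = if r = s then I r else 0)
    (h3 : ∀ s : Fin n, m ≤ (s : ℕ) → ∃ u : Fin n, (u : ℕ) < m ∧
      I u * I s = I s ∧ ∀ r : Fin n, (r : ℕ) < m → r ≠ u → I r * I s = 0)
    {u : Fin n} (hu : (u : ℕ) < m) (k : Fin n) :
    I k * I u = if k = u ∨ (m ≤ (k : ℕ) ∧ I u * I k = I k) then I k else 0 := by
  rcases lt_or_ge (k : ℕ) m with hk | hk
  · rw [h1 k u hk hu]
    simp [hk.not_ge]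
  · obtain ⟨u', -, hu'k, hzero⟩ := h3 k hk
    have hku : k ≠ u := by rintro rfl; omega
    rw [mul_comm]
    by_cases huu' : u = u'
    · subst huu'
      simp [hk, hu'k]
    · rw [hzero u hu huu']
      simp [hku, (hne k).symm]

theorem stmt2_general
    (n m : ℕ)
    (A : Type) [CommRing A] [Algebra ℂ A]
    (I : Fin n → A) (bI : Module.Basis (Fin n) ℂ A) (hbI : ∀ k, bI k = I k)
    (h1 : ∀ r s : Fin n, (r : ℕ) < m → (s : ℕ) < m →
      I r * I s = if r = s then I r else 0)
    (h3 : ∀ s : Fin n, m ≤ (s : ℕ) → ∃ u : Fin n, (u : ℕ) < m ∧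
      I u * I s = I s ∧ ∀ r : Fin n, (r : ℕ) < m → r ≠ u → I r * I s = 0)
    (N : ℕ) (hN : 1 ≤ N) (C : ℕ → ℕ → ℕ → ℂ)
    (e₂ e₃ : A)
    (V : Fin n → ℂ) (hV : charPoly N C 1 e₂ e₃ = ∑ k, V k • I k)
    (u : Fin n) (hu : (u : ℕ) < m) :
    charPoly N C (I u) (e₂ * I u) (e₃ * I u) =
        V u • I u +
          ∑ s ∈ Finset.univ.filter (fun s : Fin n => m ≤ (s : ℕ) ∧ I u * I s = I s),
            V s • I s ∧
      (charPoly N C (I u) (e₂ * I u) (e₃ * I u) = 0 ↔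
        V u = 0 ∧ ∀ s : Fin n, m ≤ (s : ℕ) → I u * I s = I s → V s = 0) := by
  set F := univ.filter (fun s : Fin n => m ≤ (s : ℕ) ∧ I u * I s = I s)
  have hne : ∀ k, I k ≠ 0 := fun k => hbI k ▸ bI.ne_zero k
  have huF : u ∉ F := by
    simp only [F, mem_filter, mem_univ, true_and, not_and]
    omega
  have hidem : IsIdempotentElem (I u) := by
    rw [IsIdempotentElem, h1 u u hu hu, if_pos rfl]
  have hproj : charPoly N C (I u) (e₂ * I u) (e₃ * I u) = ∑ k ∈ insert u F, V k • I k :=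
    calc charPoly N C (I u) (e₂ * I u) (e₃ * I u)
        = charPoly N C (1 * I u) (e₂ * I u) (e₃ * I u) := by rw [one_mul]
      _ = ∑ k, V k • (I k * I u) := by
        rw [charPoly_mul_of_isIdempotentElem hN C 1 e₂ e₃ hidem, hV, sum_mul]
        simp_rw [smul_mul_assoc]
      _ = ∑ k ∈ insert u F, V k • I k := by
        simp_rw [mul_eq_ite_of_cartan hne h1 h3 hu, smul_ite, smul_zero, ← sum_filter]
        congr 1
        ext k
        simp [F]
  have hindep : LinearIndependent ℂ I := by
    simpa only [← funext hbI] using bI.linearIndependent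
  refine ⟨by rw [hproj, sum_insert huF], ?_⟩
  rw [hproj, hindep.sum_smul_eq_zero_iff, forall_mem_insert]
  simp [F]

theorem stmt2
    (n m : ℕ) (hm : 1 ≤ m) (hmn : m ≤ n)
    (A : Type) [CommRing A] [Algebra ℂ A]
    (I : Fin n → A) (bI : Module.Basis (Fin n) ℂ A) (hbI : ∀ k, bI k = I k)
    (h1 : ∀ r s : Fin n, (r : ℕ) < m → (s : ℕ) < m →
      I r * I s = if r = s then I r else 0)
    (h2 : ∀ r s : Fin n, m ≤ (r : ℕ) → m ≤ (s : ℕ) →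
      I r * I s ∈ Submodule.span ℂ (I '' {k : Fin n | max (r : ℕ) (s : ℕ) < (k : ℕ)}))
    (h3 : ∀ s : Fin n, m ≤ (s : ℕ) → ∃ u : Fin n, (u : ℕ) < m ∧
      I u * I s = I s ∧ ∀ r : Fin n, (r : ℕ) < m → r ≠ u → I r * I s = 0)
    (N : ℕ) (hN : 1 ≤ N) (C : ℕ → ℕ → ℕ → ℂ)
    (a b : Fin n → ℂ) (e₂ e₃ : A)
    (he₂ : e₂ = ∑ r, a r • I r) (he₃ : e₃ = ∑ r, b r • I r)
    (V : Fin n → ℂ) (hV : charPoly N C 1 e₂ e₃ = ∑ k, V k • I k)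
    (u : Fin n) (hu : (u : ℕ) < m) :
    charPoly N C (I u) (e₂ * I u) (e₃ * I u) =
        V u • I u +
          ∑ s ∈ Finset.univ.filter (fun s : Fin n => m ≤ (s : ℕ) ∧ I u * I s = I s),
            V s • I s ∧
      (charPoly N C (I u) (e₂ * I u) (e₃ * I u) = 0 ↔
        V u = 0 ∧ ∀ s : Fin n, m ≤ (s : ℕ) → I u * I s = I s → V s = 0) :=
  stmt2_general n m A I bI hbI h1 h3 N hN C e₂ e₃ V hV u hu
end

section
/- (Theorem 1.) Suppose the vectors 1, e₂, e₃ of A are linearly independent over ℝ and satisfy the characteristic equation X(1, e₂, e₃) = 0. Then for every u ∈ {1,…,m} the triple of vectors 1, ẽ₂(u), ẽ₃(u) (which lie in the subalgebra of A spanned by 1 and I_{m+1},…,I_n) satisfies the characteristic equation X(1, ẽ₂(u), ẽ₃(u)) = 0. -/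
open scoped Classical

/-!
Multiplication by the idempotent `I_u` is a ring homomorphism onto the corner `I_u A`, so
`I_u · X(1, ẽ₂, ẽ₃) = I_u · X(1, e₂, e₃) = 0`, because `I_u ẽᵢ = I_u eᵢ`. On the other hand
`X(1, ẽ₂, ẽ₃)` lies in the subalgebra `ℂ·1 + I_u·Rad`, where `Rad` is the span of
`I_{m+1}, …, I_n`; `I_u` acts as the identity on `I_u·Rad` and does not lie in it, so
multiplication by `I_u` is injective on this subalgebra.
-/

open Submodule

theorem IsIdempotentElem.mul_eq_mul_iff_mk_eq {R : Type*} [CommRing R] {e x y : R}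
    (he : IsIdempotentElem e) :
    e * x = e * y ↔ Ideal.Quotient.mk (Ideal.span {1 - e}) x = Ideal.Quotient.mk _ y := by
  rw [Ideal.Quotient.eq, Ideal.mem_span_singleton', ← sub_eq_zero, ← mul_sub]
  constructor
  · intro h
    exact ⟨x - y, by linear_combination -h⟩
  · rintro ⟨c, hc⟩
    rw [← hc]
    linear_combination (-c) * he.eq

section CharPoly

variable {A B : Type} [CommRing A] [Algebra ℂ A] [CommRing B] [Algebra ℂ B]
  (N : ℕ) (C : ℕ → ℕ → ℕ → ℂ)

theorem map_charPoly (φ : A →ₐ[ℂ] B) (g₁ g₂ g₃ : A) :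
    φ (charPoly N C g₁ g₂ g₃) = charPoly N C (φ g₁) (φ g₂) (φ g₃) := by
  simp only [charPoly, map_sum, map_smul, map_mul, map_pow]

theorem charPoly_mem (S : Subalgebra ℂ A) {g₁ g₂ g₃ : A} (h₁ : g₁ ∈ S) (h₂ : g₂ ∈ S)
    (h₃ : g₃ ∈ S) : charPoly N C g₁ g₂ g₃ ∈ S :=
  Subalgebra.sum_mem _ fun _ _ =>
    Subalgebra.smul_mem _ (mul_mem (mul_mem (pow_mem h₁ _) (pow_mem h₂ _)) (pow_mem h₃ _)) _

theorem IsIdempotentElem.mul_charPoly_congr {e g₁ g₂ g₃ g₁' g₂' g₃' : A}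
    (he : IsIdempotentElem e) (h₁ : e * g₁ = e * g₁') (h₂ : e * g₂ = e * g₂')
    (h₃ : e * g₃ = e * g₃') :
    e * charPoly N C g₁ g₂ g₃ = e * charPoly N C g₁' g₂' g₃' := by
  simp only [he.mul_eq_mul_iff_mk_eq, ← Ideal.Quotient.mkₐ_eq_mk ℂ] at h₁ h₂ h₃ ⊢
  rw [map_charPoly, map_charPoly, h₁, h₂, h₃]

end CharPoly

def IsIdempotentElem.mulLeft {R A : Type*} [CommSemiring R] [CommSemiring A] [Algebra R A]
    {e : A} (he : IsIdempotentElem e) : A →ₙₐ[R] A where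
  toFun x := e * x
  map_smul' c x := mul_smul_comm c e x
  map_zero' := mul_zero e
  map_add' := mul_add e
  map_mul' x y := by
    change e * (x * y) = e * x * (e * y)
    rw [mul_mul_mul_comm, he.eq]

theorem IsIdempotentElem.mul_eq_self_of_mem_map_mulLeft {R A : Type*} [CommSemiring R]
    [CommSemiring A] [Algebra R A] {e t : A} (he : IsIdempotentElem e)
    {S : NonUnitalSubalgebra R A} (ht : t ∈ S.map he.mulLeft) : e * t = t := by
  obtain ⟨s, -, rfl⟩ := ht
  change e * (e * s) = e * s
  rw [← mul_assoc, he.eq]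

theorem eq_zero_of_mem_adjoin_of_mul_eq_zero {K A : Type*} [Field K] [CommRing A] [Algebra K A]
    {e x : A} (T : NonUnitalSubalgebra K A) (hT : ∀ t ∈ T, e * t = t) (heT : e ∉ T)
    (hx : x ∈ Algebra.adjoin K (T : Set A)) (hex : e * x = 0) : x = 0 := by
  have hx' : x ∈ span K {1} ⊔ T.toSubmodule :=
    Algebra.adjoin_nonUnitalSubalgebra_eq_span T ▸ hx
  obtain ⟨y, hy, t, ht, rfl⟩ := mem_sup.1 hx'
  obtain ⟨c, rfl⟩ := mem_span_singleton.1 hy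
  rw [mul_add, mul_smul_comm, mul_one, hT t ht] at hex
  obtain rfl : c = 0 := by
    by_contra hc
    have he : e = c⁻¹ • -t := by
      rw [neg_eq_of_add_eq_zero_left hex, smul_smul, inv_mul_cancel₀ hc, one_smul]
    exact heT (he ▸ T.toSubmodule.smul_mem c⁻¹ (neg_mem ht))
  simpa using hex

section Cartan

variable {n : ℕ} {A : Type} [CommRing A] [Algebra ℂ A] (m : ℕ) (I : Fin n → A)

/-- The span `Rad` of the radical basis vectors `I_{m+1}, …, I_n` (indices are `0`-based). -/
def radicalSpan : Submodule ℂ A :=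
  span ℂ (I '' {k | m ≤ (k : ℕ)})

variable {m I}

theorem mul_mem_radicalSpan
    (h2 : ∀ r s : Fin n, m ≤ (r : ℕ) → m ≤ (s : ℕ) →
      I r * I s ∈ span ℂ (I '' {k : Fin n | max (r : ℕ) (s : ℕ) < (k : ℕ)}))
    {x y : A} (hx : x ∈ radicalSpan m I) (hy : y ∈ radicalSpan m I) :
    x * y ∈ radicalSpan m I := by
  have hxy := mul_mem_mul hx hy
  rw [radicalSpan, span_mul_span] at hxy
  refine span_le.2 ?_ hxy
  rintro _ ⟨_, ⟨r, hr, rfl⟩, _, ⟨s, hs, rfl⟩, rfl⟩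
  refine span_mono ?_ (h2 r s hr hs)
  rintro _ ⟨k, hk, rfl⟩
  exact ⟨k, show m ≤ (k : ℕ) from hr.trans ((le_max_left _ _).trans_lt hk).le, rfl⟩

theorem mul_mem_radicalSpan_of_lt
    (h3 : ∀ s : Fin n, m ≤ (s : ℕ) → ∃ u : Fin n, (u : ℕ) < m ∧
      I u * I s = I s ∧ ∀ r : Fin n, (r : ℕ) < m → r ≠ u → I r * I s = 0)
    {u : Fin n} (hu : (u : ℕ) < m) {x : A} (hx : x ∈ radicalSpan m I) :
    I u * x ∈ radicalSpan m I := by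
  suffices radicalSpan m I ≤ (radicalSpan m I).comap (LinearMap.mulLeft ℂ (I u)) from this hx
  refine span_le.2 ?_
  rintro _ ⟨k, hk, rfl⟩
  obtain ⟨v, -, hv, hv0⟩ := h3 k hk
  by_cases huv : u = v
  · subst huv
    change I u * I k ∈ radicalSpan m I
    rw [hv]
    exact subset_span ⟨k, hk, rfl⟩
  · change I u * I k ∈ radicalSpan m I
    rw [hv0 u hu huv]
    exact zero_mem _

theorem sum_smul_mem_radicalSpan (a : Fin n → ℂ) :
    ∑ r ∈ Finset.univ.filter (fun r : Fin n => m ≤ (r : ℕ)), a r • I r ∈ radicalSpan m I :=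
  sum_mem fun r hr => smul_mem _ _ (subset_span ⟨r, (Finset.mem_filter.1 hr).2, rfl⟩)

theorem mul_algebraMap_add_mul_radical
    (h1 : ∀ r s : Fin n, (r : ℕ) < m → (s : ℕ) < m → I r * I s = if r = s then I r else 0)
    {u : Fin n} (hu : (u : ℕ) < m) (a : Fin n → ℂ) :
    I u * (algebraMap ℂ A (a u) +
        I u * ∑ r ∈ Finset.univ.filter (fun r : Fin n => m ≤ (r : ℕ)), a r • I r) =
      I u * ∑ r, a r • I r := by
  have hIu : I u * I u = I u := (h1 u u hu hu).trans (if_pos rfl)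
  have hsemisimple :
      I u * ∑ r ∈ Finset.univ.filter (fun r : Fin n => ¬m ≤ (r : ℕ)), a r • I r = a u • I u := by
    rw [Finset.mul_sum, Finset.sum_eq_single_of_mem u (by simpa using hu)]
    · rw [mul_smul_comm, hIu]
    · intro r hr hru
      rw [mul_smul_comm, h1 u r hu (by simpa using hr), if_neg (Ne.symm hru), smul_zero]
  rw [← Finset.sum_filter_add_sum_filter_not Finset.univ (fun r : Fin n => m ≤ (r : ℕ)),
    mul_add, mul_add, hsemisimple, ← mul_assoc, hIu, Algebra.algebraMap_eq_smul_one,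
    mul_smul_comm, mul_one, add_comm]

theorem algebraMap_add_mul_mem_span_one_union
    (h3 : ∀ s : Fin n, m ≤ (s : ℕ) → ∃ u : Fin n, (u : ℕ) < m ∧
      I u * I s = I s ∧ ∀ r : Fin n, (r : ℕ) < m → r ≠ u → I r * I s = 0)
    {u : Fin n} (hu : (u : ℕ) < m) (c : ℂ) {r : A} (hr : r ∈ radicalSpan m I) :
    algebraMap ℂ A c + I u * r ∈ span ℂ ({(1 : A)} ∪ I '' {k : Fin n | m ≤ (k : ℕ)}) := by
  rw [span_union, Algebra.algebraMap_eq_smul_one]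
  exact add_mem (mem_sup_left (smul_mem _ _ (mem_span_singleton_self 1)))
    (mem_sup_right (mul_mem_radicalSpan_of_lt h3 hu hr))

end Cartan

theorem stmt5_general
    (n m : ℕ)
    (A : Type) [CommRing A] [Algebra ℂ A]
    (I : Fin n → A) (bI : Module.Basis (Fin n) ℂ A) (hbI : ∀ k, bI k = I k)
    (h1 : ∀ r s : Fin n, (r : ℕ) < m → (s : ℕ) < m →
      I r * I s = if r = s then I r else 0)
    (h2 : ∀ r s : Fin n, m ≤ (r : ℕ) → m ≤ (s : ℕ) →
      I r * I s ∈ Submodule.span ℂ (I '' {k : Fin n | max (r : ℕ) (s : ℕ) < (k : ℕ)}))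
    (h3 : ∀ s : Fin n, m ≤ (s : ℕ) → ∃ u : Fin n, (u : ℕ) < m ∧
      I u * I s = I s ∧ ∀ r : Fin n, (r : ℕ) < m → r ≠ u → I r * I s = 0)
    (N : ℕ) (C : ℕ → ℕ → ℕ → ℂ)
    (a b : Fin n → ℂ) (e₂ e₃ : A)
    (he₂ : e₂ = ∑ r, a r • I r) (he₃ : e₃ = ∑ r, b r • I r)
    (re₂ re₃ : A)
    (hre₂ : re₂ = ∑ r ∈ Finset.univ.filter (fun r : Fin n => m ≤ (r : ℕ)), a r • I r)
    (hre₃ : re₃ = ∑ r ∈ Finset.univ.filter (fun r : Fin n => m ≤ (r : ℕ)), b r • I r)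
    (te₂ te₃ : Fin n → A)
    (hte₂ : ∀ u : Fin n, te₂ u = algebraMap ℂ A (a u) + I u * re₂)
    (hte₃ : ∀ u : Fin n, te₃ u = algebraMap ℂ A (b u) + I u * re₃)
    (hchar : charPoly N C 1 e₂ e₃ = 0)
    (u : Fin n) (hu : (u : ℕ) < m) :
    te₂ u ∈ Submodule.span ℂ ({(1 : A)} ∪ I '' {k : Fin n | m ≤ (k : ℕ)}) ∧
      te₃ u ∈ Submodule.span ℂ ({(1 : A)} ∪ I '' {k : Fin n | m ≤ (k : ℕ)}) ∧
      charPoly N C 1 (te₂ u) (te₃ u) = 0 := by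
  have hIu : IsIdempotentElem (I u) := (h1 u u hu hu).trans (if_pos rfl)
  have hI : LinearIndependent ℂ I := funext hbI ▸ bI.linearIndependent
  let T := ((radicalSpan m I).toNonUnitalSubalgebra fun _ _ =>
    mul_mem_radicalSpan h2).map (hIu.mulLeft (R := ℂ))
  have hIuT : I u ∉ T := by
    rintro ⟨r, hr, hrI : I u * r = I u⟩
    refine hI.notMem_span_image (s := {k : Fin n | m ≤ (k : ℕ)}) (not_le.2 hu) ?_
    rw [← hrI]
    exact mul_mem_radicalSpan_of_lt h3 hu hr
  have hadj : ∀ c : ℂ, ∀ r ∈ radicalSpan m I,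
      algebraMap ℂ A c + I u * r ∈ Algebra.adjoin ℂ (T : Set A) := fun c r hr =>
    add_mem (Subalgebra.algebraMap_mem _ c) (Algebra.subset_adjoin ⟨r, hr, rfl⟩)
  have hre₂R : re₂ ∈ radicalSpan m I := hre₂ ▸ sum_smul_mem_radicalSpan a
  have hre₃R : re₃ ∈ radicalSpan m I := hre₃ ▸ sum_smul_mem_radicalSpan b
  refine ⟨hte₂ u ▸ algebraMap_add_mul_mem_span_one_union h3 hu _ hre₂R,
    hte₃ u ▸ algebraMap_add_mul_mem_span_one_union h3 hu _ hre₃R, ?_⟩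
  refine eq_zero_of_mem_adjoin_of_mul_eq_zero T (fun _ => hIu.mul_eq_self_of_mem_map_mulLeft) hIuT
    (charPoly_mem N C _ (Subalgebra.one_mem _) (hte₂ u ▸ hadj _ _ hre₂R)
      (hte₃ u ▸ hadj _ _ hre₃R)) ?_
  rw [hIu.mul_charPoly_congr N C rfl (g₂' := e₂) (g₃' := e₃)
    (by rw [hte₂, hre₂, he₂, mul_algebraMap_add_mul_radical h1 hu])
    (by rw [hte₃, hre₃, he₃, mul_algebraMap_add_mul_radical h1 hu]), hchar, mul_zero]

theorem stmt5
    (n m : ℕ) (hm : 1 ≤ m) (hmn : m ≤ n)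
    (A : Type) [CommRing A] [Algebra ℂ A]
    (I : Fin n → A) (bI : Module.Basis (Fin n) ℂ A) (hbI : ∀ k, bI k = I k)
    (h1 : ∀ r s : Fin n, (r : ℕ) < m → (s : ℕ) < m →
      I r * I s = if r = s then I r else 0)
    (h2 : ∀ r s : Fin n, m ≤ (r : ℕ) → m ≤ (s : ℕ) →
      I r * I s ∈ Submodule.span ℂ (I '' {k : Fin n | max (r : ℕ) (s : ℕ) < (k : ℕ)}))
    (h3 : ∀ s : Fin n, m ≤ (s : ℕ) → ∃ u : Fin n, (u : ℕ) < m ∧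
      I u * I s = I s ∧ ∀ r : Fin n, (r : ℕ) < m → r ≠ u → I r * I s = 0)
    [Module ℝ A] [IsScalarTower ℝ ℂ A]
    (N : ℕ) (hN : 1 ≤ N) (C : ℕ → ℕ → ℕ → ℂ)
    (a b : Fin n → ℂ) (e₂ e₃ : A)
    (he₂ : e₂ = ∑ r, a r • I r) (he₃ : e₃ = ∑ r, b r • I r)
    (re₂ re₃ : A)
    (hre₂ : re₂ = ∑ r ∈ Finset.univ.filter (fun r : Fin n => m ≤ (r : ℕ)), a r • I r)
    (hre₃ : re₃ = ∑ r ∈ Finset.univ.filter (fun r : Fin n => m ≤ (r : ℕ)), b r • I r)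
    (te₂ te₃ : Fin n → A)
    (hte₂ : ∀ u : Fin n, te₂ u = algebraMap ℂ A (a u) + I u * re₂)
    (hte₃ : ∀ u : Fin n, te₃ u = algebraMap ℂ A (b u) + I u * re₃)
    (hind : LinearIndependent ℝ ![(1 : A), e₂, e₃])
    (hchar : charPoly N C 1 e₂ e₃ = 0)
    (u : Fin n) (hu : (u : ℕ) < m) :
    te₂ u ∈ Submodule.span ℂ ({(1 : A)} ∪ I '' {k : Fin n | m ≤ (k : ℕ)}) ∧
      te₃ u ∈ Submodule.span ℂ ({(1 : A)} ∪ I '' {k : Fin n | m ≤ (k : ℕ)}) ∧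
      charPoly N C 1 (te₂ u) (te₃ u) = 0 :=
  stmt5_general n m A I bI hbI h1 h2 h3 N C a b e₂ e₃ he₂ he₃ re₂ re₃ hre₂ hre₃ te₂ te₃ hte₂ hte₃
    hchar u hu
end

section
/- The multiplicative identity of A equals the sum of the first m basis idempotents: 1 = Σ_{u=1}^m I_u. -/
open scoped Classical

/-
Proof idea: every basis element `I k` is fixed by exactly one of the idempotents `I u`, `u < m`, and
killed by the others (for `k < m` this is orthogonality of the idempotents, for `k ≥ m` it is the third
Cartan rule). Hence `e := ∑_{u < m} I u` satisfies `e * I k = I k` for all `k`, so multiplication by `e`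
is the identity on a basis, and `e = e * 1 = 1`.
-/

theorem Finset.sum_mul_eq_self_of_unique {ι R : Type*} [NonUnitalNonAssocSemiring R]
    {s : Finset ι} {f : ι → R} {x : R} {u₀ : ι} (hu₀ : u₀ ∈ s) (hfix : f u₀ * x = x)
    (hkill : ∀ u ∈ s, u ≠ u₀ → f u * x = 0) :
    (∑ u ∈ s, f u) * x = x := by
  rw [Finset.sum_mul, Finset.sum_eq_single_of_mem u₀ hu₀ hkill, hfix]

theorem eq_one_of_mul_eq_self_of_span_eq_top {R A : Type*} [CommSemiring R] [Semiring A]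
    [Algebra R A] {s : Set A} (hs : Submodule.span R s = ⊤) {e : A}
    (he : ∀ x ∈ s, e * x = x) : e = 1 := by
  have hmul : LinearMap.mulLeft R e = LinearMap.id := LinearMap.ext_on hs he
  simpa using LinearMap.congr_fun hmul 1

theorem stmt8_general
    (n m : ℕ)
    (A : Type) [CommRing A] [Algebra ℂ A]
    (I : Fin n → A) (bI : Module.Basis (Fin n) ℂ A) (hbI : ∀ k, bI k = I k)
    (h1 : ∀ r s : Fin n, (r : ℕ) < m → (s : ℕ) < m →
      I r * I s = if r = s then I r else 0)
    (h3 : ∀ s : Fin n, m ≤ (s : ℕ) → ∃ u : Fin n, (u : ℕ) < m ∧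
      I u * I s = I s ∧ ∀ r : Fin n, (r : ℕ) < m → r ≠ u → I r * I s = 0)
    : (1 : A) = ∑ u ∈ Finset.univ.filter (fun u : Fin n => (u : ℕ) < m), I u := by
  have hunique : ∀ k : Fin n, ∃ u : Fin n, (u : ℕ) < m ∧
      I u * I k = I k ∧ ∀ r : Fin n, (r : ℕ) < m → r ≠ u → I r * I k = 0 := by
    intro k
    by_cases hk : (k : ℕ) < m
    · refine ⟨k, hk, by simpa using h1 k k hk hk, fun r hr hrk => by simp [h1 r k hr hk, hrk]⟩
    · exact h3 k (not_lt.mp hk)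
  have hspan : Submodule.span ℂ (Set.range I) = ⊤ := by
    rw [← bI.span_eq, funext hbI]
  refine (eq_one_of_mul_eq_self_of_span_eq_top hspan ?_).symm
  rintro _ ⟨k, rfl⟩
  obtain ⟨u, hu, hfix, hkill⟩ := hunique k
  exact Finset.sum_mul_eq_self_of_unique (by simpa using hu) hfix
    fun r hr => hkill r (by simpa using hr)

theorem stmt8
    (n m : ℕ) (hm : 1 ≤ m) (hmn : m ≤ n)
    (A : Type) [CommRing A] [Algebra ℂ A]
    (I : Fin n → A) (bI : Module.Basis (Fin n) ℂ A) (hbI : ∀ k, bI k = I k)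
    (h1 : ∀ r s : Fin n, (r : ℕ) < m → (s : ℕ) < m →
      I r * I s = if r = s then I r else 0)
    (h2 : ∀ r s : Fin n, m ≤ (r : ℕ) → m ≤ (s : ℕ) →
      I r * I s ∈ Submodule.span ℂ (I '' {k : Fin n | max (r : ℕ) (s : ℕ) < (k : ℕ)}))
    (h3 : ∀ s : Fin n, m ≤ (s : ℕ) → ∃ u : Fin n, (u : ℕ) < m ∧
      I u * I s = I s ∧ ∀ r : Fin n, (r : ℕ) < m → r ≠ u → I r * I s = 0)
    : (1 : A) = ∑ u ∈ Finset.univ.filter (fun u : Fin n => (u : ℕ) < m), I u :=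
  stmt8_general n m A I bI hbI h1 h3
end

section
/- For each u ∈ {1,…,m}, the ℂ-linear span 𝓘_u of the set {I_k : k ∈ {1,…,n}, k ≠ u} is an ideal of A, and it is a maximal ideal of A. -/
/-!
The coordinate functional `φ := bI.coord u` is a character of `A`. Indeed, by bilinearity it
suffices to check `φ (I j * I k) = φ (I j) * φ (I k)` on basis vectors: for `j = k = u` this is
`I u * I u = I u`, and otherwise the Cartan rules place `I j * I k` in the span of the `I l` with
`l ≠ u`, i.e. in `ker φ`, which is the span in question. A nonzero character `A → ℂ` is surjective,
so its kernel is a maximal ideal.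
-/

open scoped Classical

open Submodule

theorem Module.Basis.mem_span_image_ne_iff_coord_eq_zero {ι R M : Type*} [Semiring R]
    [AddCommMonoid M] [Module R M] (b : Module.Basis ι R M) (u : ι) {x : M} :
    x ∈ span R (b '' {k | k ≠ u}) ↔ b.coord u x = 0 := by
  rw [b.mem_span_image, Module.Basis.coord_apply, ← Finsupp.notMem_support_iff]
  exact ⟨fun h hu => h hu rfl, fun h k hk hku => h (hku ▸ hk)⟩

theorem LinearMap.map_mul_of_basis {ι R A : Type*} [CommSemiring R] [Semiring A] [Algebra R A]
    (b : Module.Basis ι R A) (f : A →ₗ[R] R) (h : ∀ i j, f (b i * b j) = f (b i) * f (b j))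
    (x y : A) : f (x * y) = f x * f y := by
  have : (LinearMap.mul R A).compr₂ f = (LinearMap.mul R R).compl₁₂ f f :=
    LinearMap.ext_basis b b h
  exact LinearMap.congr_fun₂ this x y

theorem Ideal.exists_isMaximal_coe_eq_ker {K A : Type*} [Field K] [CommRing A] [Algebra K A]
    (f : A →ₗ[K] K) (hmul : ∀ x y, f (x * y) = f x * f y) (hf : f ≠ 0) :
    ∃ J : Ideal A, (J : Set A) = LinearMap.ker f ∧ J.IsMaximal := by
  obtain ⟨x, hx⟩ : ∃ x, f x ≠ 0 := by
    by_contra! h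
    exact hf (LinearMap.ext h)
  have hone : f 1 = 1 :=
    (mul_right_eq_self₀.mp (by rw [← hmul, mul_one])).resolve_right hx
  let φ : A →ₐ[K] K := AlgHom.ofLinearMap f hone hmul
  refine ⟨RingHom.ker φ, rfl, RingHom.ker_isMaximal_of_surjective φ fun c => ⟨c • 1, ?_⟩⟩
  simp [φ, hone]

section Cartan

variable {R A : Type*} [Semiring R] [CommSemiring A] [Module R A] {n m : ℕ} {I : Fin n → A}

theorem mul_eq_self_or_eq_zero_of_cartan
    (h3 : ∀ s : Fin n, m ≤ (s : ℕ) → ∃ u : Fin n, (u : ℕ) < m ∧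
      I u * I s = I s ∧ ∀ r : Fin n, (r : ℕ) < m → r ≠ u → I r * I s = 0)
    {r s : Fin n} (hr : (r : ℕ) < m) (hs : m ≤ (s : ℕ)) : I r * I s = I s ∨ I r * I s = 0 := by
  obtain ⟨v, -, hv, hne⟩ := h3 s hs
  by_cases hrv : r = v
  · exact .inl (hrv ▸ hv)
  · exact .inr (hne r hr hrv)

theorem mul_mem_span_image_ne_of_cartan
    (h1 : ∀ r s : Fin n, (r : ℕ) < m → (s : ℕ) < m →
      I r * I s = if r = s then I r else 0)
    (h2 : ∀ r s : Fin n, m ≤ (r : ℕ) → m ≤ (s : ℕ) →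
      I r * I s ∈ span R (I '' {k : Fin n | max (r : ℕ) (s : ℕ) < (k : ℕ)}))
    (h3 : ∀ s : Fin n, m ≤ (s : ℕ) → ∃ u : Fin n, (u : ℕ) < m ∧
      I u * I s = I s ∧ ∀ r : Fin n, (r : ℕ) < m → r ≠ u → I r * I s = 0)
    {u : Fin n} (hu : (u : ℕ) < m) (j : Fin n) {k : Fin n} (hk : k ≠ u) :
    I j * I k ∈ span R (I '' {l | l ≠ u}) := by
  have hmem : ∀ l, l ≠ u → I l ∈ span R (I '' {l | l ≠ u}) :=
    fun l hl => subset_span ⟨l, hl, rfl⟩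
  rcases lt_or_ge (j : ℕ) m with hj | hj <;> rcases lt_or_ge (k : ℕ) m with hkm | hkm
  · rw [h1 j k hj hkm]
    split_ifs with hjk
    · exact hjk ▸ hmem k hk
    · exact zero_mem _
  · rcases mul_eq_self_or_eq_zero_of_cartan h3 hj hkm with h | h <;> rw [h]
    exacts [hmem k hk, zero_mem _]
  · have hju : j ≠ u := fun h => by omega
    rw [mul_comm]
    rcases mul_eq_self_or_eq_zero_of_cartan h3 hkm hj with h | h <;> rw [h]
    exacts [hmem j hju, zero_mem _]
  · refine span_mono ?_ (h2 j k hj hkm)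
    rintro _ ⟨l, hl, rfl⟩
    exact ⟨l, fun h => by simp only [Set.mem_ofPred_eq, h] at hl; omega, rfl⟩

end Cartan

theorem Module.Basis.coord_mul_of_cartan {K A : Type*} [CommSemiring K] [CommSemiring A]
    [Algebra K A] {n m : ℕ} (b : Module.Basis (Fin n) K A)
    (h1 : ∀ r s : Fin n, (r : ℕ) < m → (s : ℕ) < m →
      b r * b s = if r = s then b r else 0)
    (h2 : ∀ r s : Fin n, m ≤ (r : ℕ) → m ≤ (s : ℕ) →
      b r * b s ∈ span K (b '' {k : Fin n | max (r : ℕ) (s : ℕ) < (k : ℕ)}))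
    (h3 : ∀ s : Fin n, m ≤ (s : ℕ) → ∃ u : Fin n, (u : ℕ) < m ∧
      b u * b s = b s ∧ ∀ r : Fin n, (r : ℕ) < m → r ≠ u → b r * b s = 0)
    {u : Fin n} (hu : (u : ℕ) < m) (j k : Fin n) :
    b.coord u (b j * b k) = b.coord u (b j) * b.coord u (b k) := by
  have hcoord : ∀ l, b.coord u (b l) = if l = u then 1 else 0 := fun l => by
    simp [Finsupp.single_apply]
  have hker : ∀ j k, k ≠ u → b.coord u (b j * b k) = 0 := fun j k hk =>
    (b.mem_span_image_ne_iff_coord_eq_zero u).mp (mul_mem_span_image_ne_of_cartan h1 h2 h3 hu j hk)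
  by_cases hk : k = u
  · by_cases hj : j = u
    · rw [hj, hk, h1 u u hu hu, if_pos rfl, hcoord, if_pos rfl, one_mul]
    · rw [mul_comm, hker k j hj, hcoord j, if_neg hj, zero_mul]
  · rw [hker j k hk, hcoord k, if_neg hk, mul_zero]

theorem stmt9_general
    (n m : ℕ)
    (A : Type) [CommRing A] [Algebra ℂ A]
    (I : Fin n → A) (bI : Module.Basis (Fin n) ℂ A) (hbI : ∀ k, bI k = I k)
    (h1 : ∀ r s : Fin n, (r : ℕ) < m → (s : ℕ) < m →
      I r * I s = if r = s then I r else 0)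
    (h2 : ∀ r s : Fin n, m ≤ (r : ℕ) → m ≤ (s : ℕ) →
      I r * I s ∈ Submodule.span ℂ (I '' {k : Fin n | max (r : ℕ) (s : ℕ) < (k : ℕ)}))
    (h3 : ∀ s : Fin n, m ≤ (s : ℕ) → ∃ u : Fin n, (u : ℕ) < m ∧
      I u * I s = I s ∧ ∀ r : Fin n, (r : ℕ) < m → r ≠ u → I r * I s = 0)
    (u : Fin n) (hu : (u : ℕ) < m) :
    ∃ J : Ideal A, (J : Set A) =
        (Submodule.span ℂ (I '' {k : Fin n | k ≠ u}) : Set A) ∧ J.IsMaximal := by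
  obtain rfl : ⇑bI = I := funext hbI
  have hmul := LinearMap.map_mul_of_basis bI (bI.coord u) (bI.coord_mul_of_cartan h1 h2 h3 hu)
  have hne : bI.coord u ≠ 0 := fun h => by simpa using LinearMap.congr_fun h (bI u)
  obtain ⟨J, hJ, hmax⟩ := Ideal.exists_isMaximal_coe_eq_ker _ hmul hne
  refine ⟨J, ?_, hmax⟩
  ext x
  rw [hJ]
  exact (bI.mem_span_image_ne_iff_coord_eq_zero u).symm

theorem stmt9
    (n m : ℕ) (hm : 1 ≤ m) (hmn : m ≤ n)
    (A : Type) [CommRing A] [Algebra ℂ A]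
    (I : Fin n → A) (bI : Module.Basis (Fin n) ℂ A) (hbI : ∀ k, bI k = I k)
    (h1 : ∀ r s : Fin n, (r : ℕ) < m → (s : ℕ) < m →
      I r * I s = if r = s then I r else 0)
    (h2 : ∀ r s : Fin n, m ≤ (r : ℕ) → m ≤ (s : ℕ) →
      I r * I s ∈ Submodule.span ℂ (I '' {k : Fin n | max (r : ℕ) (s : ℕ) < (k : ℕ)}))
    (h3 : ∀ s : Fin n, m ≤ (s : ℕ) → ∃ u : Fin n, (u : ℕ) < m ∧
      I u * I s = I s ∧ ∀ r : Fin n, (r : ℕ) < m → r ≠ u → I r * I s = 0)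
    (u : Fin n) (hu : (u : ℕ) < m) :
    ∃ J : Ideal A, (J : Set A) =
        (Submodule.span ℂ (I '' {k : Fin n | k ≠ u}) : Set A) ∧ J.IsMaximal :=
  stmt9_general n m A I bI hbI h1 h2 h3 u hu
end

section
/- The ℂ-linear span N of {I_{m+1},…,I_n} is a nilpotent subalgebra of A: any product of n−m+1 elements of N equals 0; that is, for all x_1,…,x_{n−m+1} in the ℂ-span of {I_{m+1},…,I_n}, x_1·x_2·…·x_{n−m+1} = 0. -/
/-!
Rule (2) says that the spans `N_j` of the `I_k` with `k ≥ j` satisfy `N_m · N_j ⊆ N_{j+1}`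
for `j ≥ m`. Hence a product of `t + 1` elements of `N_m` lies in `N_{m+t}`, and `N_n = 0`.
-/

open scoped Classical

namespace Submodule

variable (R : Type*) {A : Type*} [CommSemiring R] [CommSemiring A] [Algebra R A] {n : ℕ}
  (I : Fin n → A)

def spanFrom (j : ℕ) : Submodule R A := span R (I '' {k : Fin n | j ≤ (k : ℕ)})

variable {R I}

theorem spanFrom_eq_bot {j : ℕ} (hj : n ≤ j) : spanFrom R I j = ⊥ := by
  have : {k : Fin n | j ≤ (k : ℕ)} = ∅ := Set.eq_empty_of_forall_notMem fun k hk => by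
    have : j ≤ (k : ℕ) := hk
    omega
  simp [spanFrom, this]

theorem spanFrom_mul_le {m j : ℕ} (hmj : m ≤ j)
    (h : ∀ r s : Fin n, m ≤ (r : ℕ) → m ≤ (s : ℕ) →
      I r * I s ∈ span R (I '' {k : Fin n | max (r : ℕ) (s : ℕ) < (k : ℕ)})) :
    spanFrom R I m * spanFrom R I j ≤ spanFrom R I (j + 1) := by
  rw [spanFrom, spanFrom, span_mul_span, span_le]
  rintro _ ⟨_, ⟨r, hr, rfl⟩, _, ⟨s, hs, rfl⟩, rfl⟩
  have hr : m ≤ (r : ℕ) := hr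
  have hs : j ≤ (s : ℕ) := hs
  refine span_mono (Set.image_mono fun k hk => ?_) (h r s hr (hmj.trans hs))
  have hk : max (r : ℕ) s < k := hk
  change j + 1 ≤ (k : ℕ)
  omega

theorem prod_mem_spanFrom {m : ℕ}
    (h : ∀ r s : Fin n, m ≤ (r : ℕ) → m ≤ (s : ℕ) →
      I r * I s ∈ span R (I '' {k : Fin n | max (r : ℕ) (s : ℕ) < (k : ℕ)})) :
    ∀ (t : ℕ) (y : Fin (t + 1) → A), (∀ i, y i ∈ spanFrom R I m) →
      ∏ i, y i ∈ spanFrom R I (m + t)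
  | 0, y, hy => by simpa using hy 0
  | t + 1, y, hy => by
    rw [Fin.prod_univ_succ]
    exact spanFrom_mul_le (Nat.le_add_right m t) h <|
      mul_mem_mul (hy 0) (prod_mem_spanFrom h t _ fun i => hy i.succ)

end Submodule

theorem stmt12_general
    (n m : ℕ)
    (A : Type) [CommRing A] [Algebra ℂ A]
    (I : Fin n → A)
    (h2 : ∀ r s : Fin n, m ≤ (r : ℕ) → m ≤ (s : ℕ) →
      I r * I s ∈ Submodule.span ℂ (I '' {k : Fin n | max (r : ℕ) (s : ℕ) < (k : ℕ)}))
    (x : Fin (n - m + 1) → A)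
    (hx : ∀ i, x i ∈ Submodule.span ℂ (I '' {k : Fin n | m ≤ (k : ℕ)})) :
    ∏ i, x i = 0 := by
  have hprod : ∏ i, x i ∈ Submodule.spanFrom ℂ I (m + (n - m)) :=
    Submodule.prod_mem_spanFrom h2 (n - m) x hx
  rwa [Submodule.spanFrom_eq_bot (by omega), Submodule.mem_bot] at hprod

theorem stmt12
    (n m : ℕ) (hm : 1 ≤ m) (hmn : m ≤ n)
    (A : Type) [CommRing A] [Algebra ℂ A]
    (I : Fin n → A) (bI : Module.Basis (Fin n) ℂ A) (hbI : ∀ k, bI k = I k)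
    (h1 : ∀ r s : Fin n, (r : ℕ) < m → (s : ℕ) < m →
      I r * I s = if r = s then I r else 0)
    (h2 : ∀ r s : Fin n, m ≤ (r : ℕ) → m ≤ (s : ℕ) →
      I r * I s ∈ Submodule.span ℂ (I '' {k : Fin n | max (r : ℕ) (s : ℕ) < (k : ℕ)}))
    (h3 : ∀ s : Fin n, m ≤ (s : ℕ) → ∃ u : Fin n, (u : ℕ) < m ∧
      I u * I s = I s ∧ ∀ r : Fin n, (r : ℕ) < m → r ≠ u → I r * I s = 0)
    (x : Fin (n - m + 1) → A)
    (hx : ∀ i, x i ∈ Submodule.span ℂ (I '' {k : Fin n | m ≤ (k : ℕ)})) :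
    ∏ i, x i = 0 :=
  stmt12_general n m A I h2 x hx
end

section
/- For real numbers x, y, z, the element ζ := x·1 + y·e₂ + z·e₃ of A is not invertible (is not a unit of A) if and only if there exists u ∈ {1,…,m} such that x + y·Re(a_u) + z·Re(b_u) = 0 and y·Im(a_u) + z·Im(b_u) = 0; that is, the points (x,y,z) ∈ ℝ³ corresponding to non-invertible elements ζ are exactly those lying on one of the m straight lines L_u defined by these two equations. -/
/-!
The span `N` of the basis vectors `I_k` with `k ≥ m` is an ideal, and it is nilpotent because
multiplying two of its basis vectors strictly raises the index. Modulo `N` the `I_u` with `u < m`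
are orthogonal idempotents, so each coordinate `χ_u` with `u < m` is multiplicative, with
`χ_u ζ = x + y a_u + z b_u`. Hence a unit has all `χ_u ζ ≠ 0`; conversely, if they are all nonzero,
`ζ * ∑ (χ_u ζ)⁻¹ I_u` lies in `1 + N` and is a unit.
-/

open scoped Classical

open Submodule

namespace Module.Basis

variable {R A : Type*} [CommRing R] [CommRing A] [Algebra R A] {n m : ℕ}

def tailSpan (b : Basis (Fin n) R A) (j : ℕ) : Submodule R A :=
  span R (b '' {k | j ≤ (k : ℕ)})

/-- The Cartan multiplication rules (1)–(3). -/
structure IsCartan (b : Basis (Fin n) R A) (m : ℕ) : Prop where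
  mul_of_lt : ∀ r s : Fin n, (r : ℕ) < m → (s : ℕ) < m → b r * b s = if r = s then b r else 0
  mul_of_le : ∀ r s : Fin n, m ≤ (r : ℕ) → m ≤ (s : ℕ) →
    b r * b s ∈ span R (b '' {k : Fin n | max (r : ℕ) (s : ℕ) < (k : ℕ)})
  exists_mul_of_le : ∀ s : Fin n, m ≤ (s : ℕ) → ∃ u : Fin n, (u : ℕ) < m ∧
    b u * b s = b s ∧ ∀ r : Fin n, (r : ℕ) < m → r ≠ u → b r * b s = 0

section tailSpan

variable (b : Basis (Fin n) R A)

theorem mem_tailSpan_iff {j : ℕ} {v : A} :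
    v ∈ b.tailSpan j ↔ ∀ k : Fin n, (k : ℕ) < j → b.repr v k = 0 := by
  rw [tailSpan, mem_span_image]
  refine ⟨fun h k hk => ?_, fun h k hk => ?_⟩
  · by_contra hne
    exact absurd (h (Finsupp.mem_support_iff.2 hne)) (not_le.2 hk)
  · by_contra hlt
    exact Finsupp.mem_support_iff.1 hk (h k (not_le.1 hlt))

theorem basis_mem_tailSpan {j : ℕ} {k : Fin n} (hk : j ≤ k) : b k ∈ b.tailSpan j :=
  subset_span ⟨k, hk, rfl⟩

theorem tailSpan_eq_bot_of_le {j : ℕ} (hj : n ≤ j) : b.tailSpan j = ⊥ := by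
  rw [tailSpan, span_eq_bot]
  rintro _ ⟨k, hk, rfl⟩
  exact absurd (k.isLt.trans_le hj) (not_lt.2 hk)

theorem tailSpan_mul_le
    (hb : ∀ r s : Fin n, m ≤ (r : ℕ) → m ≤ (s : ℕ) →
      b r * b s ∈ span R (b '' {k : Fin n | max (r : ℕ) (s : ℕ) < (k : ℕ)}))
    {i j : ℕ} (hi : m ≤ i) (hj : m ≤ j) : b.tailSpan i * b.tailSpan j ≤ b.tailSpan (j + 1) := by
  rw [tailSpan, tailSpan, span_mul_span, span_le]
  rintro _ ⟨_, ⟨r, hr, rfl⟩, _, ⟨s, hs, rfl⟩, rfl⟩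
  refine span_mono (Set.image_mono fun k hk => ?_) (hb r s (hi.trans hr) (hj.trans hs))
  exact (hs.trans (le_max_right _ _)).trans_lt (show max (r : ℕ) s < k from hk)

theorem isNilpotent_of_mem_tailSpan
    (hb : ∀ r s : Fin n, m ≤ (r : ℕ) → m ≤ (s : ℕ) →
      b r * b s ∈ span R (b '' {k : Fin n | max (r : ℕ) (s : ℕ) < (k : ℕ)}))
    {v : A} (hv : v ∈ b.tailSpan m) : IsNilpotent v := by
  have hpow : ∀ t : ℕ, v ^ (t + 1) ∈ b.tailSpan (m + t) := by
    intro t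
    induction t with
    | zero => simpa using hv
    | succ t ih =>
      rw [pow_succ']
      exact b.tailSpan_mul_le hb le_rfl (Nat.le_add_right m t) (mul_mem_mul hv ih)
  refine ⟨n - m + 1, ?_⟩
  simpa [b.tailSpan_eq_bot_of_le (show n ≤ m + (n - m) by omega)] using hpow (n - m)

end tailSpan

variable {b : Basis (Fin n) R A}

theorem IsCartan.basis_mul_mem_tailSpan (hb : b.IsCartan m) (r : Fin n) {s : Fin n}
    (hs : m ≤ s) : b r * b s ∈ b.tailSpan m := by
  by_cases hr : (r : ℕ) < m
  · obtain ⟨u, -, hus, hmul_eq_zero⟩ := hb.exists_mul_of_le s hs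
    by_cases hru : r = u
    · rw [hru, hus]
      exact b.basis_mem_tailSpan hs
    · rw [hmul_eq_zero r hr hru]
      exact zero_mem _
  · refine span_mono (Set.image_mono fun k hk => ?_) (hb.mul_of_le r s (not_lt.1 hr) hs)
    exact (hs.trans (le_max_right _ _)).trans (show max (r : ℕ) s < k from hk).le

theorem IsCartan.repr_mul (hb : b.IsCartan m) {u : Fin n} (hu : (u : ℕ) < m) (v w : A) :
    b.repr (v * w) u = b.repr v u * b.repr w u := by
  have hvanish : ∀ r s : Fin n, m ≤ (s : ℕ) → b.repr (b r * b s) u = 0 := fun r s hs =>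
    (b.mem_tailSpan_iff).1 (hb.basis_mul_mem_tailSpan r hs) u hu
  have hbilin : (LinearMap.mul R A).compr₂ (b.coord u) =
      (LinearMap.mul R R).compl₁₂ (b.coord u) (b.coord u) := by
    refine LinearMap.ext_basis b b fun r s => ?_
    simp only [LinearMap.compr₂_apply, LinearMap.compl₁₂_apply, LinearMap.mul_apply', coord_apply,
      repr_self]
    by_cases hs : m ≤ (s : ℕ)
    · rw [hvanish r s hs, Finsupp.single_eq_of_ne (a := s) (by rintro rfl; omega), mul_zero]
    by_cases hr : m ≤ (r : ℕ)
    · rw [mul_comm (b r), hvanish s r hr, Finsupp.single_eq_of_ne (a := r) (by rintro rfl; omega),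
        zero_mul]
    rw [hb.mul_of_lt r s (not_le.1 hr) (not_le.1 hs)]
    by_cases hrs : r = s <;> by_cases hru : r = u <;> simp_all [Finsupp.single_apply]
  exact LinearMap.congr_fun₂ hbilin v w

theorem IsCartan.repr_one (hb : b.IsCartan m) {u : Fin n} (hu : (u : ℕ) < m) :
    b.repr 1 u = 1 := by
  simpa using (hb.repr_mul hu 1 (b u)).symm

theorem IsCartan.isUnit_iff (hb : b.IsCartan m) {v : A} :
    IsUnit v ↔ ∀ u : Fin n, (u : ℕ) < m → IsUnit (b.repr v u) := by
  refine ⟨fun hv u hu => ?_, fun hv => ?_⟩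
  · obtain ⟨w, hw⟩ := hv.exists_right_inv
    exact IsUnit.of_mul_eq_one (b.repr w u) (by rw [← hb.repr_mul hu, hw, hb.repr_one hu])
  · set w := ∑ u, Ring.inverse (b.repr v u) • b u
    have hsub : v * w - 1 ∈ b.tailSpan m := by
      refine (b.mem_tailSpan_iff).2 fun u hu => ?_
      rw [map_sub, Finsupp.sub_apply, hb.repr_mul hu, repr_sum_self, hb.repr_one hu,
        Ring.mul_inverse_cancel _ (hv u hu), sub_self]
    have hvw : IsUnit (v * w) := by
      simpa using (b.isNilpotent_of_mem_tailSpan hb.mul_of_le hsub).isUnit_one_add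
    exact isUnit_of_mul_isUnit_left hvw

end Module.Basis

theorem Complex.ofReal_add_mul_add_mul_eq_zero_iff {x y z : ℝ} {a b : ℂ} :
    (x : ℂ) + y * a + z * b = 0 ↔ x + y * a.re + z * b.re = 0 ∧ y * a.im + z * b.im = 0 := by
  simp [Complex.ext_iff]

theorem stmt14_general
    (n m : ℕ)
    (A : Type) [CommRing A] [Algebra ℂ A]
    (I : Fin n → A) (bI : Module.Basis (Fin n) ℂ A) (hbI : ∀ k, bI k = I k)
    (h1 : ∀ r s : Fin n, (r : ℕ) < m → (s : ℕ) < m →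
      I r * I s = if r = s then I r else 0)
    (h2 : ∀ r s : Fin n, m ≤ (r : ℕ) → m ≤ (s : ℕ) →
      I r * I s ∈ Submodule.span ℂ (I '' {k : Fin n | max (r : ℕ) (s : ℕ) < (k : ℕ)}))
    (h3 : ∀ s : Fin n, m ≤ (s : ℕ) → ∃ u : Fin n, (u : ℕ) < m ∧
      I u * I s = I s ∧ ∀ r : Fin n, (r : ℕ) < m → r ≠ u → I r * I s = 0)
    (a b : Fin n → ℂ) (e₂ e₃ : A)
    (he₂ : e₂ = ∑ r, a r • I r) (he₃ : e₃ = ∑ r, b r • I r)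
    (x y z : ℝ) :
    ¬ IsUnit ((x : ℂ) • (1 : A) + (y : ℂ) • e₂ + (z : ℂ) • e₃) ↔
      ∃ u : Fin n, (u : ℕ) < m ∧
        x + y * (a u).re + z * (b u).re = 0 ∧
        y * (a u).im + z * (b u).im = 0 := by
  obtain rfl : I = bI := (funext hbI).symm
  have hb : bI.IsCartan m := ⟨h1, h2, h3⟩
  have hrepr : ∀ u : Fin n, (u : ℕ) < m →
      bI.repr ((x : ℂ) • 1 + (y : ℂ) • e₂ + (z : ℂ) • e₃) u = x + y * a u + z * b u := by
    intro u hu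
    simp only [map_add, map_smul, Finsupp.add_apply, Finsupp.smul_apply, he₂, he₃,
      Module.Basis.repr_sum_self, hb.repr_one hu, smul_eq_mul, mul_one]
  simp only [hb.isUnit_iff, not_forall, isUnit_iff_ne_zero, not_not, exists_prop]
  refine exists_congr fun u => and_congr_right fun hu => ?_
  rw [hrepr u hu, Complex.ofReal_add_mul_add_mul_eq_zero_iff]

theorem stmt14
    (n m : ℕ) (hm : 1 ≤ m) (hmn : m ≤ n)
    (A : Type) [CommRing A] [Algebra ℂ A]
    (I : Fin n → A) (bI : Module.Basis (Fin n) ℂ A) (hbI : ∀ k, bI k = I k)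
    (h1 : ∀ r s : Fin n, (r : ℕ) < m → (s : ℕ) < m →
      I r * I s = if r = s then I r else 0)
    (h2 : ∀ r s : Fin n, m ≤ (r : ℕ) → m ≤ (s : ℕ) →
      I r * I s ∈ Submodule.span ℂ (I '' {k : Fin n | max (r : ℕ) (s : ℕ) < (k : ℕ)}))
    (h3 : ∀ s : Fin n, m ≤ (s : ℕ) → ∃ u : Fin n, (u : ℕ) < m ∧
      I u * I s = I s ∧ ∀ r : Fin n, (r : ℕ) < m → r ≠ u → I r * I s = 0)
    (a b : Fin n → ℂ) (e₂ e₃ : A)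
    (he₂ : e₂ = ∑ r, a r • I r) (he₃ : e₃ = ∑ r, b r • I r)
    (x y z : ℝ) :
    ¬ IsUnit ((x : ℂ) • (1 : A) + (y : ℂ) • e₂ + (z : ℂ) • e₃) ↔
      ∃ u : Fin n, (u : ℕ) < m ∧
        x + y * (a u).re + z * (b u).re = 0 ∧
        y * (a u).im + z * (b u).im = 0 :=
  stmt14_general n m A I bI hbI h1 h2 h3 a b e₂ e₃ he₂ he₃ x y z
end
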